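/- arXiv:1205.3817 — 7 statements merged into one kernel-verified Lean document; each statement's English description precedes it below -/
import Mathlib

section
/- Let C ⊆ ℝⁿ be a closed cone (a closed set containing 0 that is stable under multiplication by nonnegative real scalars), let B be a nondegenerate bilinear form on ℝⁿ, and let C* = {x ∈ ℝⁿ : B(x,c) ≥ 0 for all c ∈ C} be the dual cone of C with respect to B. Then the topological interior of C* is exactly the set {x ∈ ℝⁿ : B(x,c) > 0 for all c ∈ C with c ≠ 0}. -/
/-!
If `x` is interior to the dual cone and `c ≠ 0` lies in `C`, nondegeneracy gives `y` with
`B y c < 0`, and `x + t • y` stays in the dual cone for small `t > 0`, forcing `B x c > 0`.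
Conversely, strict positivity on the compact set `C ∩ sphere 0 1` persists on a neighbourhood
of `x` by continuity of `B` and compactness, and scaling spreads it to all of `C`.
-/

open Filter Topology Metric

theorem pos_of_mem_interior_dual {E : Type*} [AddCommGroup E] [Module ℝ E] [TopologicalSpace E]
    [ContinuousAdd E] [ContinuousSMul ℝ E] {C : Set E} {B : E →ₗ[ℝ] E →ₗ[ℝ] ℝ}
    (hB : B.SeparatingRight) {x : E} (hx : x ∈ interior {x | ∀ c ∈ C, 0 ≤ B x c})
    {c : E} (hc : c ∈ C) (hc0 : c ≠ 0) : 0 < B x c := by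
  obtain ⟨z, hz⟩ : ∃ z, B z c ≠ 0 := by
    by_contra! h
    exact hc0 (hB c h)
  obtain ⟨y, hy⟩ : ∃ y, B y c < 0 := by
    rcases hz.lt_or_gt with h | h
    · exact ⟨z, h⟩
    · exact ⟨-z, by simpa using h⟩
  have hline : Tendsto (fun t : ℝ => x + t • y) (𝓝[>] 0) (𝓝 x) :=
    (Continuous.tendsto' (by fun_prop) 0 x (by simp)).mono_left nhdsWithin_le_nhds
  obtain ⟨t, ht_mem, ht_pos⟩ :=
    ((hline.eventually (mem_interior_iff_mem_nhds.mp hx)).and self_mem_nhdsWithin).exists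
  have hpair : 0 ≤ B x c + t * B y c := by simpa using ht_mem c hc
  linarith [mul_neg_of_pos_of_neg ht_pos hy]

theorem mem_interior_dual_of_pos {E : Type*} [NormedAddCommGroup E] [NormedSpace ℝ E]
    [ProperSpace E] {C : Set E} (hC : IsClosed C) (hC_cone : ∀ t : ℝ, 0 ≤ t → ∀ x ∈ C, t • x ∈ C)
    (B : E →L[ℝ] E →L[ℝ] ℝ) {x : E} (hx : ∀ c ∈ C, c ≠ 0 → 0 < B x c) :
    x ∈ interior {x | ∀ c ∈ C, 0 ≤ B x c} := by
  have hK : IsCompact (C ∩ sphere 0 1) := (isCompact_sphere 0 1).inter_left hC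
  have hnear : ∀ᶠ y in 𝓝 x, ∀ c ∈ C ∩ sphere 0 1, 0 < B y c :=
    hK.eventually_forall_of_forall_eventually fun c hc =>
      B.continuous₂.continuousAt.eventually
        (isOpen_Ioi.mem_nhds (hx c hc.1 (ne_zero_of_mem_unit_sphere ⟨c, hc.2⟩)))
  rw [mem_interior_iff_mem_nhds]
  filter_upwards [hnear] with y hy c hc
  rcases eq_or_ne c 0 with rfl | hc0
  · simp
  have hnorm : 0 < ‖c‖ := norm_pos_iff.mpr hc0
  have hunit : ‖c‖⁻¹ • c ∈ C ∩ sphere 0 1 :=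
    ⟨hC_cone _ (inv_nonneg.mpr hnorm.le) c hc, by simp [norm_smul, hnorm.ne']⟩
  have hpos := hy _ hunit
  rw [map_smul, smul_eq_mul] at hpos
  exact (pos_of_mul_pos_right hpos (inv_nonneg.mpr hnorm.le)).le

theorem interior_dualCone_eq_general (n : ℕ) (C : Set (Fin n → ℝ))
    (hC_closed : IsClosed C)
    (hC_cone : ∀ t : ℝ, 0 ≤ t → ∀ x ∈ C, t • x ∈ C)
    (B : (Fin n → ℝ) →ₗ[ℝ] (Fin n → ℝ) →ₗ[ℝ] ℝ)
    (hB : LinearMap.BilinForm.Nondegenerate B) :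
    interior {x : Fin n → ℝ | ∀ c ∈ C, 0 ≤ B x c} =
      {x : Fin n → ℝ | ∀ c ∈ C, c ≠ 0 → 0 < B x c} := by
  ext x
  exact ⟨fun hx c hc hc0 => pos_of_mem_interior_dual hB.2 hx hc hc0,
    mem_interior_dual_of_pos hC_closed hC_cone B.toContinuousBilinearMap⟩

/-- The interior of the dual cone (w.r.t. a nondegenerate bilinear form `B`) of a
closed cone `C ⊆ ℝⁿ` is exactly the set of vectors pairing strictly positively
with every nonzero element of `C`. -/
theorem interior_dualCone_eq (n : ℕ) (C : Set (Fin n → ℝ))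
    (hC_closed : IsClosed C) (hC0 : (0 : Fin n → ℝ) ∈ C)
    (hC_cone : ∀ t : ℝ, 0 ≤ t → ∀ x ∈ C, t • x ∈ C)
    (B : (Fin n → ℝ) →ₗ[ℝ] (Fin n → ℝ) →ₗ[ℝ] ℝ)
    (hB : LinearMap.BilinForm.Nondegenerate B) :
    interior {x : Fin n → ℝ | ∀ c ∈ C, 0 ≤ B x c} =
      {x : Fin n → ℝ | ∀ c ∈ C, c ≠ 0 → 0 < B x c} :=
  interior_dualCone_eq_general n C hC_closed hC_cone B hB
end

section
/- Let C ⊆ ℝⁿ be a convex cone with nonempty interior and let f : ℝⁿ → ℝ be a linear functional such that f(v) ≤ 0 for some nonzero vector v in the closure of C. Then the set {x ∈ C : f(x) ≤ 1} has infinite Lebesgue measure. -/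
open MeasureTheory Metric
open scoped Pointwise

/-!
The open set `U = interior C ∩ {f < 1}` is nonempty because `0 ∈ closure C = closure (interior C)`.
Since `C` is a convex cone, adding a point of `closure C` keeps a point of `interior C` inside
`interior C`, and `f v ≤ 0`, so `U` is stable under `x ↦ x + t • v` for `t ≥ 0`.
Such a set contains infinitely many disjoint translates of a ball along the ray of `v`.
-/

section ConvexCone

variable {E : Type*} [AddCommGroup E] [Module ℝ E] [TopologicalSpace E] {C : Set E}

theorem smul_mem_closure_of_cone [ContinuousConstSMul ℝ E]
    (hcone : ∀ t : ℝ, 0 ≤ t → ∀ x ∈ C, t • x ∈ C) {t : ℝ} (ht : 0 ≤ t) {x : E}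
    (hx : x ∈ closure C) : t • x ∈ closure C :=
  map_mem_closure (continuous_const_smul t) hx fun y hy => hcone t ht y hy

theorem smul_mem_interior_of_cone [ContinuousConstSMul ℝ E]
    (hcone : ∀ t : ℝ, 0 ≤ t → ∀ x ∈ C, t • x ∈ C) {t : ℝ} (ht : 0 < t) {x : E}
    (hx : x ∈ interior C) : t • x ∈ interior C := by
  have hsub : t • C ⊆ C := Set.smul_set_subset_iff.2 fun y hy => hcone t ht.le y hy
  exact interior_mono hsub (interior_smul₀ ht.ne' C ▸ Set.smul_mem_smul_set hx)

theorem add_mem_interior_of_mem_closure_of_cone [IsTopologicalAddGroup E]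
    [ContinuousConstSMul ℝ E] (hconv : Convex ℝ C)
    (hcone : ∀ t : ℝ, 0 ≤ t → ∀ x ∈ C, t • x ∈ C) {x w : E} (hx : x ∈ interior C)
    (hw : w ∈ closure C) : x + w ∈ interior C := by
  have h := hconv.combo_interior_closure_mem_interior (smul_mem_interior_of_cone hcone two_pos hx)
    (smul_mem_closure_of_cone hcone zero_le_two hw) (a := 1 / 2) (b := 1 / 2)
    (by norm_num) (by norm_num) (by norm_num)
  simpa [smul_smul] using h

theorem interior_inter_nonempty_of_cone [IsTopologicalAddGroup E] [ContinuousSMul ℝ E]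
    (hconv : Convex ℝ C) (hcone : ∀ t : ℝ, 0 ≤ t → ∀ x ∈ C, t • x ∈ C)
    (hint : (interior C).Nonempty) {W : Set E} (hW : IsOpen W) (h0W : 0 ∈ W) :
    (interior C ∩ W).Nonempty := by
  obtain ⟨x, hx⟩ := hint
  have h0 : (0 : E) ∈ closure (interior C) := by
    rw [hconv.closure_interior_eq_closure_of_nonempty_interior ⟨x, hx⟩]
    exact subset_closure (by simpa using hcone 0 le_rfl x (interior_subset hx))
  rw [Set.inter_comm]
  exact mem_closure_iff.1 h0 W hW h0W

end ConvexCone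

section AddHaar

variable {E : Type*} [NormedAddCommGroup E] [NormedSpace ℝ E] [MeasurableSpace E] [BorelSpace E]
  (μ : Measure E) [μ.IsAddHaarMeasure]

theorem measure_iUnion_ball_add_smul_eq_top (c w : E) {r : ℝ} (hr : 0 < r) (hw : 2 * r ≤ ‖w‖) :
    μ (⋃ k : ℕ, ball (c + (k : ℝ) • w) r) = ⊤ := by
  have hdisj : Pairwise (Function.onFun Disjoint fun k : ℕ => ball (c + (k : ℝ) • w) r) := by
    intro j k hjk
    apply ball_disjoint_ball
    have hjk' : (1 : ℝ) ≤ |(j : ℝ) - k| := by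
      exact_mod_cast Int.one_le_abs (sub_ne_zero.2 (Int.ofNat_inj.not.2 hjk))
    calc r + r ≤ ‖w‖ := by linarith
      _ ≤ |(j : ℝ) - k| * ‖w‖ := le_mul_of_one_le_left (norm_nonneg w) hjk'
      _ = dist (c + (j : ℝ) • w) (c + (k : ℝ) • w) := by
        rw [dist_add_left, dist_eq_norm, ← sub_smul, norm_smul, Real.norm_eq_abs]
  rw [measure_iUnion hdisj fun _ => measurableSet_ball,
    tsum_congr fun k => Measure.addHaar_ball_center μ _ r]
  exact ENNReal.tsum_const_eq_top_of_ne_zero (measure_ball_pos μ _ hr).ne'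

theorem measure_eq_top_of_add_smul_mem {U : Set E} (hU : IsOpen U) (hne : U.Nonempty) {v : E}
    (hv : v ≠ 0) (hUv : ∀ x ∈ U, ∀ t : ℝ, 0 ≤ t → x + t • v ∈ U) : μ U = ⊤ := by
  obtain ⟨c, hc⟩ := hne
  obtain ⟨r, hr, hball⟩ := Metric.isOpen_iff.1 hU c hc
  set w := (2 * r / ‖v‖) • v
  have hw : ‖w‖ = 2 * r := by
    rw [norm_smul, Real.norm_eq_abs, abs_of_pos (by positivity),
      div_mul_cancel₀ _ (norm_ne_zero_iff.2 hv)]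
  refine measure_mono_top (Set.iUnion_subset fun k y hy => ?_)
    (measure_iUnion_ball_add_smul_eq_top μ c w hr hw.ge)
  have hyk : y - (k : ℝ) • w ∈ U := hball (by rwa [mem_ball, dist_sub_eq_dist_add_left])
  simpa [w, smul_smul] using hUv _ hyk ((k : ℝ) * (2 * r / ‖v‖)) (by positivity)

end AddHaar

/-- If `C ⊆ ℝⁿ` is a convex cone with nonempty interior and `f` is a linear functional
with `f v ≤ 0` for some nonzero `v` in the closure of `C`, then the slice
`{x ∈ C | f x ≤ 1}` has infinite Lebesgue measure. -/
theorem slice_of_cone_infinite_volume (n : ℕ) (C : Set (Fin n → ℝ))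
    (hC_convex : Convex ℝ C)
    (hC_cone : ∀ t : ℝ, 0 ≤ t → ∀ x ∈ C, t • x ∈ C)
    (hC_int : (interior C).Nonempty)
    (f : (Fin n → ℝ) →ₗ[ℝ] ℝ)
    (v : Fin n → ℝ) (hv_mem : v ∈ closure C) (hv_ne : v ≠ 0) (hv : f v ≤ 0) :
    volume {x ∈ C | f x ≤ 1} = ⊤ := by
  set U := interior C ∩ {x | f x < 1}
  have hf_lt : IsOpen {x | f x < 1} := isOpen_lt f.continuous_of_finiteDimensional continuous_const
  have hU_ne : U.Nonempty :=
    interior_inter_nonempty_of_cone hC_convex hC_cone hC_int hf_lt (by simp)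
  have hU_add : ∀ x ∈ U, ∀ t : ℝ, 0 ≤ t → x + t • v ∈ U := by
    rintro x ⟨hx, hfx : f x < 1⟩ t ht
    refine ⟨add_mem_interior_of_mem_closure_of_cone hC_convex hC_cone hx
      (smul_mem_closure_of_cone hC_cone ht hv_mem), ?_⟩
    show f (x + t • v) < 1
    rw [map_add, map_smul, smul_eq_mul]
    linarith [mul_nonpos_of_nonneg_of_nonpos ht hv]
  refine measure_mono_top ?_
    (measure_eq_top_of_add_smul_mem volume (isOpen_interior.inter hf_lt) hU_ne hv_ne hU_add)
  rintro x ⟨hx, hfx : f x < 1⟩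
  exact ⟨interior_subset hx, hfx.le⟩
end

section
/- Let C ⊆ ℝⁿ be a closed convex cone with nonempty interior and let f : ℝⁿ → ℝ be a linear functional. Then the Lebesgue measure of {x ∈ C : f(x) ≤ 1} is finite if and only if f(c) > 0 for every nonzero c ∈ C. -/
/-!
If `f > 0` on `C \ {0}`, then by compactness of `C ∩ sphere 0 1` there is `m > 0` with
`m * ‖x‖ ≤ f x` on `C`, so the slice lies in the ball of radius `m⁻¹`. Otherwise some nonzero
`c ∈ C` has `f c ≤ 0`. The slice contains a small ball (a point of `interior C` pushed towards
the origin, where `f < 1`) and is stable under adding nonnegative multiples of `c`, because a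
convex cone is closed under addition. Hence it contains infinitely many pairwise disjoint
translates of that ball, all of the same positive Haar measure.
-/

open MeasureTheory Metric Set
open scoped Pointwise

variable {E : Type*} [NormedAddCommGroup E] [NormedSpace ℝ E]

def IsCone (C : Set E) : Prop :=
  ∀ t : ℝ, 0 ≤ t → ∀ x ∈ C, t • x ∈ C

variable {C : Set E}

theorem IsCone.add_mem (hC_cone : IsCone C) (hC_convex : Convex ℝ C) {x y : E} (hx : x ∈ C)
    (hy : y ∈ C) : x + y ∈ C := by
  have hmid := hC_convex hx hy (by norm_num : (0 : ℝ) ≤ 1 / 2) (by norm_num : (0 : ℝ) ≤ 1 / 2)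
    (by norm_num)
  have h2 := hC_cone 2 zero_le_two _ hmid
  rwa [smul_add, smul_smul, smul_smul, mul_one_div_cancel two_ne_zero, one_smul, one_smul] at h2

theorem IsCone.smul_mem_interior (hC_cone : IsCone C) {t : ℝ} (ht : 0 < t) {x : E}
    (hx : x ∈ interior C) : t • x ∈ interior C := by
  have hsub : t • interior C ⊆ interior C := by
    rw [← interior_smul₀ ht.ne']
    exact interior_mono (smul_set_subset_iff.2 fun y hy => hC_cone t ht.le y hy)
  exact hsub (smul_mem_smul_set hx)

theorem exists_pos_mul_norm_le_of_pos_on_cone [ProperSpace E] (hC_closed : IsClosed C)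
    (hC_cone : IsCone C) (f : E →L[ℝ] ℝ) (hpos : ∀ c ∈ C, c ≠ 0 → 0 < f c) :
    ∃ m > 0, ∀ x ∈ C, m * ‖x‖ ≤ f x := by
  have hK : IsCompact (C ∩ sphere 0 1) := (isCompact_sphere 0 1).inter_left hC_closed
  obtain ⟨m, hm, hmK⟩ := hK.exists_forall_le' f.continuous.continuousOn
    fun u hu => hpos u hu.1 (ne_zero_of_mem_unit_sphere ⟨u, hu.2⟩)
  refine ⟨m, hm, fun x hx => ?_⟩
  rcases eq_or_ne x 0 with rfl | hx0
  · simp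
  have hxn : 0 < ‖x‖ := norm_pos_iff.2 hx0
  have hu : ‖x‖⁻¹ • x ∈ C ∩ sphere 0 1 :=
    ⟨hC_cone _ (inv_nonneg.2 hxn.le) x hx, by simp [norm_smul, hxn.ne']⟩
  have hmu := hmK _ hu
  rwa [map_smul, smul_eq_mul, le_inv_mul_iff₀ hxn, mul_comm] at hmu

theorem isBounded_slice_of_pos_on_cone [ProperSpace E] (hC_closed : IsClosed C)
    (hC_cone : IsCone C) (f : E →L[ℝ] ℝ) (hpos : ∀ c ∈ C, c ≠ 0 → 0 < f c) :
    Bornology.IsBounded {x ∈ C | f x ≤ 1} := by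
  obtain ⟨m, hm, hmC⟩ := exists_pos_mul_norm_le_of_pos_on_cone hC_closed hC_cone f hpos
  refine (isBounded_closedBall (x := 0) (r := m⁻¹)).subset fun x hx => ?_
  rw [mem_closedBall_zero_iff, ← mul_one m⁻¹, le_inv_mul_iff₀ hm]
  exact (hmC x hx.1).trans hx.2

theorem measure_eq_top_of_ball_translates_subset [MeasurableSpace E] [BorelSpace E]
    (μ : Measure E) [μ.IsAddHaarMeasure] {S : Set E} {y v : E} {ε : ℝ} (hε : 0 < ε)
    (hv : 2 * ε ≤ ‖v‖) (hS : ∀ k : ℕ, ball (y + (k : ℝ) • v) ε ⊆ S) : μ S = ⊤ := by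
  have hdisj : Pairwise (Function.onFun Disjoint fun k : ℕ => ball (y + (k : ℝ) • v) ε) := by
    intro j k hjk
    apply ball_disjoint_ball
    have h1 : (1 : ℝ) ≤ |(j : ℝ) - k| := by
      exact_mod_cast Int.one_le_abs (sub_ne_zero.2 (Int.ofNat_inj.not.2 hjk))
    calc ε + ε = 2 * ε := by ring
      _ ≤ |(j : ℝ) - k| * ‖v‖ := by nlinarith [norm_nonneg v]
      _ = dist (y + (j : ℝ) • v) (y + (k : ℝ) • v) := by
        rw [dist_eq_norm, add_sub_add_left_eq_sub, ← sub_smul, norm_smul, Real.norm_eq_abs]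
  have hball : μ (ball (0 : E) ε) ≠ 0 := (measure_ball_pos μ 0 hε).ne'
  refine top_le_iff.1 ?_
  calc ⊤ = ∑' _ : ℕ, μ (ball (0 : E) ε) := (ENNReal.tsum_const_eq_top_of_ne_zero hball).symm
    _ = ∑' k : ℕ, μ (ball (y + (k : ℝ) • v) ε) := by
      simp only [Measure.addHaar_ball_center μ (y + _)]
    _ = μ (⋃ k : ℕ, ball (y + (k : ℝ) • v) ε) :=
      (measure_iUnion hdisj fun _ => measurableSet_ball).symm
    _ ≤ μ S := measure_mono (iUnion_subset hS)

theorem measure_slice_eq_top_of_nonpos [MeasurableSpace E] [BorelSpace E] (μ : Measure E)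
    [μ.IsAddHaarMeasure] (hC_convex : Convex ℝ C) (hC_cone : IsCone C)
    (hC_int : (interior C).Nonempty) (f : E →L[ℝ] ℝ) {c : E} (hcC : c ∈ C) (hc0 : c ≠ 0) (hfc : f c ≤ 0) :
    μ {x ∈ C | f x ≤ 1} = ⊤ := by
  obtain ⟨x₀, hx₀⟩ := hC_int
  set t : ℝ := (|f x₀| + 1)⁻¹
  have ht : 0 < t := by positivity
  have hft : f (t • x₀) < 1 := by
    rw [map_smul, smul_eq_mul, inv_mul_lt_iff₀ (by positivity)]
    linarith [le_abs_self (f x₀)]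
  have hU : IsOpen (interior C ∩ f ⁻¹' Iio 1) :=
    isOpen_interior.inter (isOpen_Iio.preimage f.continuous)
  obtain ⟨ε, hε, hball⟩ := Metric.isOpen_iff.1 hU (t • x₀)
    ⟨hC_cone.smul_mem_interior ht hx₀, hft⟩
  set v : E := (2 * ε / ‖c‖) • c
  have hcn : 0 < ‖c‖ := norm_pos_iff.2 hc0
  refine measure_eq_top_of_ball_translates_subset μ hε (y := t • x₀) (v := v) ?_ ?_
  · rw [norm_smul, Real.norm_of_nonneg (by positivity), div_mul_cancel₀ _ hcn.ne']
  intro k w hw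
  set d : E := (k : ℝ) • v
  have hdC : d ∈ C := by
    simp only [d, v, smul_smul]
    exact hC_cone _ (by positivity) c hcC
  have hfd : f d ≤ 0 := by
    simp only [d, v, map_smul, smul_eq_mul]
    exact mul_nonpos_of_nonneg_of_nonpos (by positivity)
      (mul_nonpos_of_nonneg_of_nonpos (by positivity) hfc)
  have hwd : w - d ∈ ball (t • x₀) ε := by
    rw [mem_ball_iff_norm] at hw ⊢
    rwa [sub_sub, add_comm d]
  obtain ⟨hwdC, hwdf⟩ := hball hwd
  have hwC := hC_cone.add_mem hC_convex (interior_subset hwdC) hdC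
  rw [sub_add_cancel] at hwC
  refine ⟨hwC, ?_⟩
  have hfw : f w = f (w - d) + f d := by rw [map_sub, sub_add_cancel]
  linarith [show f (w - d) < 1 from hwdf]

/-- For a closed convex cone `C ⊆ ℝⁿ` with nonempty interior and a linear functional
`f`, the slice `{x ∈ C | f x ≤ 1}` has finite Lebesgue measure if and only if `f`
is positive on all nonzero points of `C`. -/
theorem slice_finite_volume_iff (n : ℕ) (C : Set (Fin n → ℝ))
    (hC_closed : IsClosed C) (hC_convex : Convex ℝ C)
    (hC_cone : ∀ t : ℝ, 0 ≤ t → ∀ x ∈ C, t • x ∈ C)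
    (hC_int : (interior C).Nonempty)
    (f : (Fin n → ℝ) →ₗ[ℝ] ℝ) :
    volume {x ∈ C | f x ≤ 1} < ⊤ ↔ ∀ c ∈ C, c ≠ 0 → 0 < f c := by
  set F := LinearMap.toContinuousLinearMap f
  constructor
  · intro hfin c hcC hc0
    by_contra! hfc
    exact hfin.ne (measure_slice_eq_top_of_nonpos volume hC_convex hC_cone hC_int F hcC hc0 hfc)
  · intro hpos
    exact (isBounded_slice_of_pos_on_cone hC_closed hC_cone F hpos).measure_lt_top
end

section
/- For every integer r ≥ 0, the Lebesgue measure in ℝ^{1+r} of the set { (a, b₁, …, b_r) : bᵢ ≥ 0 for all 1 ≤ i ≤ r, b₁ + ⋯ + b_r ≤ a, and 3a − (b₁ + ⋯ + b_r) ≤ 1 } equals (1/2)^r · 1/(r+1)! · 1/3. -/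
/-!
For `b` in the positive orthant with `σ = ∑ bᵢ`, the fibre of the region over `b` is the interval
`σ ≤ a ≤ (1 + σ) / 3`, of length `(1 - 2σ) / 3`. What remains is the integral of
`(1 - 2 ∑ bᵢ)₊` over the orthant; in general, on `ℝⁿ`,
`∫_{b ≥ 0} (s - c ∑ bᵢ)₊ db = s ^ (n + 1) / (cⁿ (n + 1)!)`, since peeling off one
coordinate reduces it to `∫₀^∞ (s - c t)₊ ^ (m + 1) dt`.
-/

open MeasureTheory Set

lemma lintegral_Ici_ofReal_sub_mul_pow {c : ℝ} (hc : 0 < c) (s : ℝ) (m : ℕ) :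
    ∫⁻ t in Ici 0, ENNReal.ofReal (s - c * t) ^ (m + 1) =
      ENNReal.ofReal s ^ (m + 2) * ENNReal.ofReal (1 / (c * (m + 2))) := by
  rcases le_or_gt s 0 with hs | hs
  · have hzero : EqOn (fun t => ENNReal.ofReal (s - c * t) ^ (m + 1)) 0 (Ici 0) := fun t ht => by
      have : s - c * t ≤ 0 := by nlinarith [mem_Ici.mp ht]
      simp [ENNReal.ofReal_of_nonpos this]
    simp [setLIntegral_congr_fun measurableSet_Ici hzero, ENNReal.ofReal_of_nonpos hs]
  have hsupp : (fun t => ENNReal.ofReal (s - c * t) ^ (m + 1)).support ⊆ Iic (s / c) := by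
    intro t ht
    by_contra hlt
    have : s - c * t ≤ 0 := by
      have := (div_lt_iff₀' hc).mp (not_le.mp hlt); linarith
    simp [ENNReal.ofReal_of_nonpos this] at ht
  have hnonneg : ∀ t ∈ Icc 0 (s / c), 0 ≤ s - c * t := fun t ht => by
    have := (le_div_iff₀' hc).mp ht.2; linarith
  rw [← setLIntegral_eq_of_support_subset hsupp, Measure.restrict_restrict measurableSet_Iic,
    Iic_inter_Ici, setLIntegral_congr_fun measurableSet_Icc
      (fun t ht => (ENNReal.ofReal_pow (hnonneg t ht) (m + 1)).symm),
    ← ofReal_integral_eq_lintegral_ofReal (Continuous.integrableOn_Icc (by fun_prop))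
      (ae_restrict_of_forall_mem measurableSet_Icc fun t ht => pow_nonneg (hnonneg t ht) _),
    integral_Icc_eq_integral_Ioc, ← intervalIntegral.integral_of_le (by positivity),
    intervalIntegral.integral_comp_sub_mul (fun x => x ^ (m + 1)) hc.ne', integral_pow,
    ← ENNReal.ofReal_pow hs.le, ← ENNReal.ofReal_mul (by positivity)]
  congr 1
  rw [smul_eq_mul, mul_div_cancel₀ _ hc.ne', sub_self, mul_zero, sub_zero]
  push_cast
  field_simp
  ring

lemma lintegral_pi_Ici_ofReal_sub_mul_sum {c : ℝ} (hc : 0 < c) (n : ℕ) (s : ℝ) :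
    ∫⁻ x, ENNReal.ofReal (s - c * ∑ i, x i)
        ∂(Measure.pi fun _ : Fin n => volume.restrict (Ici (0 : ℝ))) =
      ENNReal.ofReal s ^ (n + 1) * ENNReal.ofReal (1 / (c ^ n * (n + 1).factorial)) := by
  induction n generalizing s with
  | zero => simp
  | succ n ih =>
    have e := measurePreserving_piFinSuccAbove
      (fun _ : Fin (n + 1) => volume.restrict (Ici (0 : ℝ))) 0
    rw [← e.symm.lintegral_comp_emb (MeasurableEquiv.measurableEmbedding _),
      lintegral_prod _ (by fun_prop)]
    simp only [MeasurableEquiv.piFinSuccAbove_symm_apply, Fin.insertNthEquiv, Equiv.coe_fn_mk,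
      Fin.insertNth_zero', Fin.sum_univ_succ, Fin.cons_zero, Fin.cons_succ, mul_add, ← sub_sub, ih]
    rw [lintegral_mul_const _ (by fun_prop), lintegral_Ici_ofReal_sub_mul_pow hc, mul_assoc,
      ← ENNReal.ofReal_mul (by positivity)]
    congr 2
    push_cast [Nat.factorial_succ]
    field_simp
    ring

def nefRegion (r : ℕ) : Set (ℝ × (Fin r → ℝ)) :=
  {p | (∀ i, 0 ≤ p.2 i) ∧ (∑ i, p.2 i) ≤ p.1 ∧ 3 * p.1 - (∑ i, p.2 i) ≤ 1}

lemma measurableSet_nefRegion (r : ℕ) : MeasurableSet (nefRegion r) := by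
  unfold nefRegion
  measurability

lemma volume_nefRegion_fiber {r : ℕ} (b : Fin r → ℝ) :
    volume ((fun a => (a, b)) ⁻¹' nefRegion r) =
      (univ.pi fun _ => Ici 0).indicator
        (fun b => ENNReal.ofReal (1 / 3) * ENNReal.ofReal (1 - 2 * ∑ i, b i)) b := by
  by_cases hb : ∀ i, 0 ≤ b i
  · have hfiber : (fun a => (a, b)) ⁻¹' nefRegion r = Icc (∑ i, b i) ((1 + ∑ i, b i) / 3) := by
      ext a
      simp only [nefRegion, mem_preimage, mem_ofPred_eq, mem_Icc, hb, implies_true, true_and]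
      constructor <;> rintro ⟨h₁, h₂⟩ <;> exact ⟨h₁, by linarith⟩
    rw [indicator_of_mem (by simpa only [mem_univ_pi, mem_Ici] using hb), hfiber, Real.volume_Icc,
      ← ENNReal.ofReal_mul (by norm_num)]
    ring_nf
  · have hfiber : (fun a => (a, b)) ⁻¹' nefRegion r = ∅ := by
      ext a
      simp [nefRegion, hb]
    rw [indicator_of_notMem (by simpa only [mem_univ_pi, mem_Ici] using hb), hfiber,
      measure_empty]

/-- The nef cone volume of the blow-up of `ℙ²` in `r` points on a line: the Lebesgue
measure in `ℝ^{1+r}` of `{(a, b) : bᵢ ≥ 0, Σbᵢ ≤ a, 3a − Σbᵢ ≤ 1}` equals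
`(1/2)^r · 1/(r+1)! · 1/3`. -/
theorem nef_volume_points_on_line (r : ℕ) :
    volume {p : ℝ × (Fin r → ℝ) |
        (∀ i, 0 ≤ p.2 i) ∧ (∑ i, p.2 i) ≤ p.1 ∧ 3 * p.1 - (∑ i, p.2 i) ≤ 1} =
      ENNReal.ofReal ((1 / 2) ^ r * (1 / (Nat.factorial (r + 1))) * (1 / 3)) := by
  change volume (nefRegion r) = _
  rw [Measure.volume_eq_prod, Measure.prod_apply_symm (measurableSet_nefRegion r)]
  simp_rw [volume_nefRegion_fiber]
  rw [lintegral_indicator (MeasurableSet.univ_pi fun _ => measurableSet_Ici), volume_pi,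
    Measure.restrict_pi_pi, lintegral_const_mul _ (by fun_prop),
    lintegral_pi_Ici_ofReal_sub_mul_sum two_pos, ENNReal.ofReal_one, one_pow, one_mul,
    ← ENNReal.ofReal_mul (by norm_num)]
  congr 1
  rw [one_div_pow, one_div_mul_one_div]
  ring
end

section
/- For all integers 0 ≤ s ≤ r, the Lebesgue measure in ℝ^{1+r} of the set { (a, b₁, …, b_r) : bᵢ ≤ 0 for 1 ≤ i ≤ s, b_j ≥ 0 for s < j ≤ r, b_{s+1} + ⋯ + b_r ≤ a, and 3a − (b₁ + ⋯ + b_r) ≤ 1 } equals (1/2)^{r−s} · 1/(3 · (r+1)!). -/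
/-!
The linear map `(a, b) ↦ (3 (a - ∑_{j ≥ s} b_j), -b_1, …, -b_s, 2 b_{s+1}, …, 2 b_r)`, a
transvection followed by a diagonal scaling, has coordinates summing to `3a - ∑ bᵢ`. It therefore
maps the region onto the corner simplex `{x ≥ 0, ∑ x ≤ 1}` of `ℝ^{r+1}`, whose volume `1/(r+1)!`
is computed by slicing off one coordinate at a time, and its determinant is
`3 · (-1)^s · 2^(r-s)`.
-/

open MeasureTheory Finset
open scoped Nat

def cornerSimplex (ι : Type*) [Fintype ι] (c : ℝ) : Set (ι → ℝ) :=
  {x | (∀ i, 0 ≤ x i) ∧ ∑ i, x i ≤ c}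

theorem isClosed_cornerSimplex (ι : Type*) [Fintype ι] (c : ℝ) :
    IsClosed (cornerSimplex ι c) := by
  simp only [cornerSimplex, Set.ofPred_and, Set.ofPred_forall]
  exact (isClosed_iInter fun i => isClosed_le continuous_const (continuous_apply i)).inter
    (isClosed_le (by fun_prop) continuous_const)

theorem cornerSimplex_eq_empty (ι : Type*) [Fintype ι] {c : ℝ} (hc : c < 0) :
    cornerSimplex ι c = ∅ :=
  Set.eq_empty_of_forall_notMem fun _ ⟨hx, hsum⟩ =>
    (sum_nonneg fun i _ => hx i).not_gt (hsum.trans_lt hc)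

theorem cons_mem_cornerSimplex {n : ℕ} {c a : ℝ} {x : Fin n → ℝ} :
    Fin.cons a x ∈ cornerSimplex (Fin (n + 1)) c ↔ 0 ≤ a ∧ x ∈ cornerSimplex (Fin n) (c - a) := by
  simp only [cornerSimplex, Set.mem_ofPred_eq, Fin.forall_fin_succ, Fin.sum_univ_succ,
    Fin.cons_zero, Fin.cons_succ, le_sub_iff_add_le', and_assoc]

theorem piFinSuccAbove_symm_apply_zero {α : Type*} [MeasurableSpace α] {n : ℕ}
    (p : α × (Fin n → α)) :
    (MeasurableEquiv.piFinSuccAbove (fun _ : Fin (n + 1) => α) 0).symm p = Fin.cons p.1 p.2 := by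
  simp [MeasurableEquiv.piFinSuccAbove_symm_apply, Fin.insertNthEquiv]

theorem volume_cornerSimplex_succ (n : ℕ) (c : ℝ) :
    volume (cornerSimplex (Fin (n + 1)) c) =
      ∫⁻ a, volume {x : Fin n → ℝ | 0 ≤ a ∧ x ∈ cornerSimplex (Fin n) (c - a)} := by
  let e := MeasurableEquiv.piFinSuccAbove (fun _ : Fin (n + 1) => ℝ) 0
  have hmeas : MeasurableSet (e.symm ⁻¹' cornerSimplex (Fin (n + 1)) c) :=
    (isClosed_cornerSimplex _ c).measurableSet.preimage e.symm.measurable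
  rw [← (volume_preserving_piFinSuccAbove _ 0).symm.measure_preimage_equiv, Measure.volume_eq_prod,
    Measure.prod_apply hmeas]
  simp only [e, Set.preimage, Set.mem_ofPred_eq, piFinSuccAbove_symm_apply_zero,
    cons_mem_cornerSimplex]

theorem lintegral_Icc_sub_pow_div_factorial (n : ℕ) {c : ℝ} (hc : 0 ≤ c) :
    ∫⁻ a in Set.Icc 0 c, ENNReal.ofReal ((c - a) ^ n / n !) =
      ENNReal.ofReal (c ^ (n + 1) / (n + 1)!) := by
  have hnonneg : 0 ≤ᵐ[volume.restrict (Set.Icc 0 c)] fun a => (c - a) ^ n / n ! :=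
    (ae_restrict_iff' measurableSet_Icc).2 <| ae_of_all _ fun a ha => by
      have : 0 ≤ c - a := sub_nonneg.2 ha.2
      positivity
  rw [← ofReal_integral_eq_lintegral_ofReal (Continuous.integrableOn_Icc (by fun_prop)) hnonneg,
    integral_Icc_eq_integral_Ioc, ← intervalIntegral.integral_of_le hc,
    intervalIntegral.integral_div, intervalIntegral.integral_comp_sub_left (fun a => a ^ n),
    integral_pow, sub_self, sub_zero, zero_pow n.succ_ne_zero, sub_zero, div_div,
    Nat.factorial_succ, Nat.cast_mul, Nat.cast_succ]

theorem volume_cornerSimplex (n : ℕ) {c : ℝ} (hc : 0 ≤ c) :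
    volume (cornerSimplex (Fin n) c) = ENNReal.ofReal (c ^ n / n !) := by
  induction n generalizing c with
  | zero =>
    have : cornerSimplex (Fin 0) c = Set.univ := by simp [cornerSimplex, hc]
    simp [this, volume_pi]
  | succ n ih =>
    rw [volume_cornerSimplex_succ, ← lintegral_Icc_sub_pow_div_factorial n hc,
      ← lintegral_indicator measurableSet_Icc]
    refine lintegral_congr fun a => ?_
    by_cases ha : a ∈ Set.Icc 0 c
    · simp only [ha.1, true_and, Set.ofPred_mem_eq, Set.indicator_of_mem ha]
      exact ih (sub_nonneg.2 ha.2)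
    · rw [Set.indicator_of_notMem ha]
      rcases not_and_or.1 ha with ha | ha
      · simp [ha]
      · simp [cornerSimplex_eq_empty _ (sub_neg.2 (not_le.1 ha))]

theorem Fin.card_filter_le_val (n m : ℕ) : #{i : Fin n | m ≤ (i : ℕ)} = n - m := by
  have h := card_filter_add_card_filter_not (s := univ) (p := fun i : Fin n => (i : ℕ) < m)
  simp only [not_lt, card_fin, Fin.card_filter_val_lt] at h
  omega

def chamberWeight {r : ℕ} (s : ℕ) (i : Fin r) : ℝ := if s ≤ (i : ℕ) then 2 else -1

def tailSum (r s : ℕ) : (Fin r → ℝ) →ₗ[ℝ] ℝ :=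
  ∑ i ∈ univ.filter (fun i : Fin r => s ≤ (i : ℕ)), LinearMap.proj i

def chamberMap (r s : ℕ) : (ℝ × (Fin r → ℝ)) →ₗ[ℝ] ℝ × (Fin r → ℝ) :=
  (((3 : ℝ) • LinearMap.id).prodMap (Matrix.toLin' (Matrix.diagonal (chamberWeight s)))) ∘ₗ
    LinearMap.transvection (-(tailSum r s ∘ₗ LinearMap.snd ℝ ℝ _)) (1, 0)

theorem tailSum_apply (r s : ℕ) (b : Fin r → ℝ) :
    tailSum r s b = ∑ i ∈ univ.filter (fun i : Fin r => s ≤ (i : ℕ)), b i := by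
  simp [tailSum]

theorem chamberMap_apply (r s : ℕ) (p : ℝ × (Fin r → ℝ)) :
    chamberMap r s p = (3 * (p.1 - tailSum r s p.2), fun i => chamberWeight s i * p.2 i) := by
  ext i <;> simp [chamberMap, LinearMap.transvection.apply, Matrix.mulVec_diagonal, sub_eq_add_neg]

theorem sum_chamberWeight_mul {r : ℕ} (s : ℕ) (b : Fin r → ℝ) :
    ∑ i, chamberWeight s i * b i = 3 * tailSum r s b - ∑ i, b i := by
  rw [tailSum_apply, sum_filter, mul_sum, ← sum_sub_distrib]
  refine sum_congr rfl fun i _ => ?_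
  unfold chamberWeight
  split_ifs <;> ring

theorem forall_chamberWeight_mul_nonneg_iff {r : ℕ} (s : ℕ) (b : Fin r → ℝ) :
    (∀ i, 0 ≤ chamberWeight s i * b i) ↔
      (∀ i : Fin r, (i : ℕ) < s → b i ≤ 0) ∧ ∀ i : Fin r, s ≤ (i : ℕ) → 0 ≤ b i := by
  simp only [← forall_and]
  refine forall_congr' fun i => ?_
  by_cases h : s ≤ (i : ℕ)
  · simp [chamberWeight, h, not_lt.2 h]
  · simp [chamberWeight, h, not_le.1 h]

theorem det_chamberMap (r s : ℕ) :
    LinearMap.det (chamberMap r s) = 3 * ∏ i : Fin r, chamberWeight s i := by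
  simp [chamberMap, LinearMap.det_prodMap, Matrix.det_diagonal]

theorem abs_det_chamberMap (r s : ℕ) : |LinearMap.det (chamberMap r s)| = 3 * 2 ^ (r - s) := by
  have habs : ∀ i : Fin r, |chamberWeight s i| = if s ≤ (i : ℕ) then 2 else 1 := fun i => by
    unfold chamberWeight; split_ifs <;> norm_num
  rw [det_chamberMap, abs_mul, abs_prod, abs_of_pos three_pos]
  simp only [habs, prod_ite, prod_const, one_pow, mul_one, Fin.card_filter_le_val]

theorem chamber_eq_preimage (r s : ℕ) :
    {p : ℝ × (Fin r → ℝ) |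
        (∀ i : Fin r, (i : ℕ) < s → p.2 i ≤ 0) ∧
        (∀ i : Fin r, s ≤ (i : ℕ) → 0 ≤ p.2 i) ∧
        (∑ i ∈ Finset.univ.filter (fun i : Fin r => s ≤ (i : ℕ)), p.2 i) ≤ p.1 ∧
        3 * p.1 - (∑ i, p.2 i) ≤ 1} =
      chamberMap r s ⁻¹'
        ((MeasurableEquiv.piFinSuccAbove (fun _ : Fin (r + 1) => ℝ) 0).symm ⁻¹'
          cornerSimplex (Fin (r + 1)) 1) := by
  ext ⟨a, b⟩
  simp only [Set.mem_preimage, piFinSuccAbove_symm_apply_zero, chamberMap_apply,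
    cons_mem_cornerSimplex]
  simp only [cornerSimplex, Set.mem_ofPred_eq, sum_chamberWeight_mul,
    forall_chamberWeight_mul_nonneg_iff, ← tailSum_apply]
  constructor
  · rintro ⟨hneg, hpos, htail, hslice⟩
    exact ⟨by linarith, ⟨hneg, hpos⟩, by linarith⟩
  · rintro ⟨htail, ⟨hneg, hpos⟩, hslice⟩
    exact ⟨hneg, hpos, by linarith, by linarith⟩

theorem chamber_volume_points_on_line_general (r s : ℕ) :
    volume {p : ℝ × (Fin r → ℝ) |
        (∀ i : Fin r, (i : ℕ) < s → p.2 i ≤ 0) ∧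
        (∀ i : Fin r, s ≤ (i : ℕ) → 0 ≤ p.2 i) ∧
        (∑ i ∈ Finset.univ.filter (fun i : Fin r => s ≤ (i : ℕ)), p.2 i) ≤ p.1 ∧
        3 * p.1 - (∑ i, p.2 i) ≤ 1} =
      ENNReal.ofReal ((1 / 2) ^ (r - s) * (1 / (3 * Nat.factorial (r + 1)))) := by
  -- instance search does not unfold `volume` on a product to a product measure
  have : (volume : Measure (ℝ × (Fin r → ℝ))).IsAddHaarMeasure :=
    Measure.prod.instIsAddHaarMeasure _ _
  have hdet : LinearMap.det (chamberMap r s) ≠ 0 :=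
    abs_ne_zero.1 (by rw [abs_det_chamberMap]; positivity)
  rw [chamber_eq_preimage, Measure.addHaar_preimage_linearMap _ hdet,
    (volume_preserving_piFinSuccAbove (fun _ : Fin (r + 1) => ℝ) 0).symm.measure_preimage_equiv,
    volume_cornerSimplex (r + 1) zero_le_one, ← ENNReal.ofReal_mul (abs_nonneg _), abs_inv,
    abs_det_chamberMap]
  congr 1
  field_simp
  rw [one_pow, ← mul_pow]
  norm_num

/-- Zariski chamber volumes on the blow-up of `ℙ²` in `r` points on a line: for the
chamber supported on the first `s` exceptional curves, the Lebesgue measure in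
`ℝ^{1+r}` of `{(a, b) : bᵢ ≤ 0 for i ≤ s, b_j ≥ 0 for j > s, Σ_{j>s} b_j ≤ a,
3a − Σbᵢ ≤ 1}` equals `(1/2)^{r−s} · 1/(3·(r+1)!)`. -/
theorem chamber_volume_points_on_line (r s : ℕ) (hs : s ≤ r) :
    volume {p : ℝ × (Fin r → ℝ) |
        (∀ i : Fin r, (i : ℕ) < s → p.2 i ≤ 0) ∧
        (∀ i : Fin r, s ≤ (i : ℕ) → 0 ≤ p.2 i) ∧
        (∑ i ∈ Finset.univ.filter (fun i : Fin r => s ≤ (i : ℕ)), p.2 i) ≤ p.1 ∧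
        3 * p.1 - (∑ i, p.2 i) ≤ 1} =
      ENNReal.ofReal ((1 / 2) ^ (r - s) * (1 / (3 * Nat.factorial (r + 1)))) :=
  chamber_volume_points_on_line_general r s
end

section
/- The Lebesgue measure in ℝ⁴ of the set { (a, b₁, b₂, b₃) : bᵢ ≥ 0 for all i, bᵢ + b_j ≤ a for all i ≠ j, and 3a − (b₁ + b₂ + b₃) ≤ 1 } equals 1/288. -/
/-!
The quadratic Cremona involution `σ`, which sends `aL − Σ bᵢEᵢ` to
`(2a − Σ b)L − Σ (a − Σ b + bᵢ)Eᵢ`, is linear with `σ ∘ σ = id`, so `|det σ| = 1` and it preserves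
Lebesgue measure. It preserves the nef cone and `−K`, hence the slice `P = {−K · D ≤ 1}` of the
nef cone, and it negates `ℓ = a − Σ bᵢ`, the intersection number with `L − E₁ − E₂ − E₃`. So `P`
has twice the volume of its half `ℓ ≥ 0`, where the conditions `bᵢ + b_j ≤ a` follow from
`bᵢ ≥ 0`. Over each `b ≥ 0` the section of that half is the interval `Σ b ≤ a ≤ (1 + Σ b)/3`, of
length `(2/3)(1/2 − Σ b)`, and the Dirichlet integral
`∫_{b ≥ 0} (c − Σ b)^k db = c^(n+k) k!/(n+k)!` gives the volume `(2/3)(1/2)^4/4! = 1/576`.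
-/

open MeasureTheory Set
open scoped Nat

theorem lintegral_Ici_ofReal_sub_pow (c : ℝ) {m : ℕ} (hm : m ≠ 0) :
    ∫⁻ z in Ici 0, ENNReal.ofReal (c - z) ^ m = ENNReal.ofReal c ^ (m + 1) / (m + 1) := by
  have h_vanish : ∀ z, c ≤ z → ENNReal.ofReal (c - z) ^ m = 0 := fun z hz => by
    simp [ENNReal.ofReal_eq_zero.2 (sub_nonpos.2 hz), hm]
  rcases le_total c 0 with hc | hc
  · rw [setLIntegral_congr_fun measurableSet_Ici fun z hz => h_vanish z (hc.trans hz),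
      lintegral_zero, ENNReal.ofReal_eq_zero.2 hc, zero_pow m.succ_ne_zero, ENNReal.zero_div]
  have h_within : ∫⁻ z in Icc 0 c, ENNReal.ofReal (c - z) ^ m =
      ENNReal.ofReal (∫ z in (0)..c, (c - z) ^ m) := by
    rw [intervalIntegral.integral_of_le hc, ← integral_Icc_eq_integral_Ioc,
      ofReal_integral_eq_lintegral_ofReal]
    · refine setLIntegral_congr_fun measurableSet_Icc fun z hz => ?_
      rw [ENNReal.ofReal_pow (sub_nonneg.2 hz.2)]
    · exact (by fun_prop : Continuous fun z : ℝ => (c - z) ^ m).integrableOn_Icc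
    · exact (ae_restrict_iff' measurableSet_Icc).2 <| .of_forall fun z hz =>
        pow_nonneg (sub_nonneg.2 hz.2) m
  rw [← lintegral_inter_add_sdiff _ _ measurableSet_Iic,
    setLIntegral_congr_fun (measurableSet_Ici.diff measurableSet_Iic)
      fun z hz => h_vanish z (not_le.1 hz.2).le,
    lintegral_zero, add_zero, Ici_inter_Iic, h_within,
    intervalIntegral.integral_comp_sub_left (· ^ m), integral_pow, sub_self, sub_zero,
    zero_pow m.succ_ne_zero, sub_zero, ENNReal.ofReal_div_of_pos (by positivity),
    ENNReal.ofReal_pow hc]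
  norm_cast

theorem lintegral_Ici_ofReal_sub_sum_pow (n : ℕ) {k : ℕ} (hk : k ≠ 0) (c : ℝ) :
    ∫⁻ x in Ici (0 : Fin n → ℝ), ENNReal.ofReal (c - ∑ i, x i) ^ k =
      ENNReal.ofReal c ^ (n + k) * (k ! / (n + k)! : ENNReal) := by
  induction n generalizing c with
  | zero =>
    rw [show Ici (0 : Fin 0 → ℝ) = univ from eq_univ_of_forall fun x i => i.elim0]
    simp only [Finset.univ_eq_empty, Finset.sum_empty, sub_zero, setLIntegral_const, volume_pi,
      Measure.pi_empty_univ, mul_one, zero_add]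
    rw [ENNReal.div_self (by simp [Nat.factorial_ne_zero]) (ENNReal.natCast_ne_top _), mul_one]
  | succ n ih =>
    have e := (volume_preserving_piFinSuccAbove (fun _ : Fin (n + 1) => ℝ) 0).symm
    have h_orthant :
        (MeasurableEquiv.piFinSuccAbove (fun _ : Fin (n + 1) => ℝ) 0).symm ⁻¹' Ici 0 =
          Ici 0 ×ˢ Ici 0 := by
      ext ⟨x, y⟩
      simp [Fin.consEquiv, Pi.le_def, Fin.forall_fin_succ]
    rw [← e.setLIntegral_comp_preimage_emb (MeasurableEquiv.measurableEmbedding _), h_orthant,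
      Measure.volume_eq_prod, ← Measure.prod_restrict, lintegral_prod _ (by fun_prop)]
    simp only [MeasurableEquiv.piFinSuccAbove_symm_apply, Fin.insertNthEquiv_zero,
      Fin.consEquiv_apply, Fin.sum_cons, ← sub_sub, ih]
    rw [lintegral_mul_const _ (by fun_prop), lintegral_Ici_ofReal_sub_pow _ (by omega),
      show n + 1 + k = n + k + 1 by omega, Nat.factorial_succ, Nat.cast_mul,
      ENNReal.div_eq_inv_mul, ENNReal.div_eq_inv_mul, ENNReal.div_eq_inv_mul,
      ENNReal.mul_inv (by simp) (by simp)]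
    push_cast
    ring

def lowerSlice (n : ℕ) : Set (ℝ × (Fin n → ℝ)) :=
  {p | 0 ≤ p.2 ∧ ∑ i, p.2 i ≤ p.1 ∧ 3 * p.1 - ∑ i, p.2 i ≤ 1}

theorem volume_lowerSlice (n : ℕ) :
    volume (lowerSlice n) =
      ENNReal.ofReal (2 / 3) * ENNReal.ofReal (1 / 2) ^ (n + 1) / (n + 1)! := by
  have hmeas : MeasurableSet (lowerSlice n) := by unfold lowerSlice; measurability
  have hslice (b : Fin n → ℝ) : volume ((fun a => (a, b)) ⁻¹' lowerSlice n) =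
      (Ici 0).indicator (fun b => ENNReal.ofReal (2 / 3) * ENNReal.ofReal (1 / 2 - ∑ i, b i) ^ 1) b := by
    by_cases hb : 0 ≤ b
    · have : (fun a => (a, b)) ⁻¹' lowerSlice n = Icc (∑ i, b i) ((1 + ∑ i, b i) / 3) := by
        ext a
        simp only [lowerSlice, mem_preimage, mem_ofPred_eq, mem_Icc, hb, true_and]
        constructor <;> rintro ⟨h₁, h₂⟩ <;> exact ⟨h₁, by linarith⟩
      rw [this, Real.volume_Icc, indicator_of_mem (mem_Ici.2 hb), pow_one,
        ← ENNReal.ofReal_mul (by norm_num)]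
      ring_nf
    · rw [show (fun a => (a, b)) ⁻¹' lowerSlice n = ∅ from
          eq_empty_of_forall_notMem fun a ha => hb ha.1,
        measure_empty, indicator_of_notMem (by simpa using hb)]
  rw [Measure.volume_eq_prod, Measure.prod_apply_symm hmeas, lintegral_congr hslice,
    lintegral_indicator measurableSet_Ici, lintegral_const_mul _ (by fun_prop),
    lintegral_Ici_ofReal_sub_sum_pow n one_ne_zero, Nat.factorial_one, Nat.cast_one,
    mul_one_div, mul_div_assoc]

theorem LinearMap.abs_det_eq_one_of_involutive {R M : Type*} [CommRing R] [LinearOrder R]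
    [IsStrictOrderedRing R] [AddCommGroup M] [Module R M] {f : M →ₗ[R] M}
    (hf : Function.Involutive f) : |LinearMap.det f| = 1 := by
  have h : LinearMap.det f * LinearMap.det f = 1 := by
    rw [← LinearMap.det_comp, show f ∘ₗ f = LinearMap.id from LinearMap.ext hf, LinearMap.det_id]
  rw [← pow_eq_one_iff_of_nonneg (abs_nonneg _) two_ne_zero, sq_abs, sq, h]

theorem measure_eq_two_mul_measure_inter_nonneg {α : Type*} [MeasurableSpace α] {μ : Measure α}
    {σ : α → α} {ℓ : α → ℝ} {P : Set α} (hσ : ∀ s, μ (σ ⁻¹' s) = μ s) (hPσ : σ ⁻¹' P = P)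
    (hℓσ : ∀ x, ℓ (σ x) = -ℓ x) (hP : MeasurableSet P) (hℓ : Measurable ℓ)
    (hℓ₀ : μ {x | ℓ x = 0} = 0) :
    μ P = 2 * μ (P ∩ {x | 0 ≤ ℓ x}) := by
  have hflip : σ ⁻¹' (P ∩ {x | 0 ≤ ℓ x}) = P ∩ {x | ℓ x ≤ 0} := by
    ext x
    simp [hPσ ▸ mem_preimage (f := σ) (s := P) (a := x), hℓσ]
  have hcover : P ∩ {x | 0 ≤ ℓ x} ∪ P ∩ {x | ℓ x ≤ 0} = P := by
    rw [← inter_union_distrib_left]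
    exact inter_eq_left.2 fun x _ => le_total 0 (ℓ x)
  have hnull : AEDisjoint μ (P ∩ {x | 0 ≤ ℓ x}) (P ∩ {x | ℓ x ≤ 0}) :=
    measure_mono_null (fun x ⟨⟨_, h₁⟩, _, h₂⟩ => le_antisymm h₂ h₁) hℓ₀
  calc μ P = μ (P ∩ {x | 0 ≤ ℓ x} ∪ σ ⁻¹' (P ∩ {x | 0 ≤ ℓ x})) := by rw [hflip, hcover]
    _ = μ (P ∩ {x | 0 ≤ ℓ x}) + μ (σ ⁻¹' (P ∩ {x | 0 ≤ ℓ x})) := by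
      rw [hflip]
      exact measure_union₀ (hP.inter (measurableSet_le hℓ measurable_const)).nullMeasurableSet
        hnull
    _ = 2 * μ (P ∩ {x | 0 ≤ ℓ x}) := by rw [hσ, two_mul]

instance (n : ℕ) : (volume : Measure (ℝ × (Fin n → ℝ))).IsAddHaarMeasure :=
  Measure.prod.instIsAddHaarMeasure _ _

def fstSubSum (n : ℕ) : (ℝ × (Fin n → ℝ)) →ₗ[ℝ] ℝ :=
  LinearMap.fst ℝ ℝ _ - ∑ i, (LinearMap.proj i).comp (LinearMap.snd ℝ ℝ _)

@[simp]
theorem fstSubSum_apply (n : ℕ) (p : ℝ × (Fin n → ℝ)) : fstSubSum n p = p.1 - ∑ i, p.2 i := by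
  simp [fstSubSum]

theorem volume_fstSubSum_eq_zero (n : ℕ) :
    volume {p : ℝ × (Fin n → ℝ) | fstSubSum n p = 0} = 0 :=
  Measure.addHaar_submodule volume (LinearMap.ker (fstSubSum n)) fun h => by
    simpa using
      (h ▸ Submodule.mem_top : ((1 : ℝ), (0 : Fin n → ℝ)) ∈ LinearMap.ker (fstSubSum n))

def cremona : (ℝ × (Fin 3 → ℝ)) →ₗ[ℝ] ℝ × (Fin 3 → ℝ) where
  toFun p := (2 * p.1 - ∑ i, p.2 i, fun i => p.1 - ∑ j, p.2 j + p.2 i)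
  map_add' p q := by ext <;> simp [Finset.sum_add_distrib] <;> ring
  map_smul' c p := by ext <;> simp [← Finset.mul_sum] <;> ring

theorem cremona_apply (p : ℝ × (Fin 3 → ℝ)) :
    cremona p = (2 * p.1 - ∑ i, p.2 i, fun i => p.1 - ∑ j, p.2 j + p.2 i) := rfl

theorem cremona_involutive : Function.Involutive cremona := fun p => by
  ext <;> simp [cremona_apply, Fin.sum_univ_three] <;> ring

theorem volume_preimage_cremona (s : Set (ℝ × (Fin 3 → ℝ))) :
    volume (cremona ⁻¹' s) = volume s := by
  have hdet := LinearMap.abs_det_eq_one_of_involutive cremona_involutive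
  rw [Measure.addHaar_preimage_linearMap _ (abs_ne_zero.1 (hdet.symm ▸ one_ne_zero)), abs_inv,
    hdet, inv_one, ENNReal.ofReal_one, one_mul]

theorem fstSubSum_cremona (p : ℝ × (Fin 3 → ℝ)) :
    fstSubSum 3 (cremona p) = -fstSubSum 3 p := by
  simp [cremona_apply, Fin.sum_univ_three]
  ring

def nefSlice : Set (ℝ × (Fin 3 → ℝ)) :=
  {p | (∀ i, 0 ≤ p.2 i) ∧ (∀ i j : Fin 3, i ≠ j → p.2 i + p.2 j ≤ p.1) ∧
    3 * p.1 - (∑ i, p.2 i) ≤ 1}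

theorem mem_nefSlice_iff (p : ℝ × (Fin 3 → ℝ)) : p ∈ nefSlice ↔
    0 ≤ p.2 0 ∧ 0 ≤ p.2 1 ∧ 0 ≤ p.2 2 ∧ p.2 0 + p.2 1 ≤ p.1 ∧ p.2 0 + p.2 2 ≤ p.1 ∧
      p.2 1 + p.2 2 ≤ p.1 ∧ 3 * p.1 - (p.2 0 + p.2 1 + p.2 2) ≤ 1 := by
  simp only [nefSlice, mem_ofPred_eq, Fin.forall_fin_succ, Fin.sum_univ_three]
  simp [add_comm (p.2 1) (p.2 0), add_comm (p.2 2) (p.2 0), add_comm (p.2 2) (p.2 1)]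
  tauto

theorem measurableSet_nefSlice : MeasurableSet nefSlice := by
  unfold nefSlice
  measurability

theorem cremona_preimage_nefSlice : cremona ⁻¹' nefSlice = nefSlice := by
  have hmaps : MapsTo cremona nefSlice nefSlice := fun p hp => by
    obtain ⟨h₀, h₁, h₂, h₀₁, h₀₂, h₁₂, hK⟩ := (mem_nefSlice_iff p).1 hp
    rw [mem_nefSlice_iff]
    simp only [cremona_apply, Fin.sum_univ_three]
    refine ⟨?_, ?_, ?_, ?_, ?_, ?_, ?_⟩ <;> linarith
  exact Subset.antisymm (fun p hp => cremona_involutive p ▸ hmaps hp) hmaps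

theorem nefSlice_inter_fstSubSum_nonneg :
    nefSlice ∩ {p | 0 ≤ fstSubSum 3 p} = lowerSlice 3 := by
  ext p
  simp only [mem_inter_iff, mem_nefSlice_iff, lowerSlice, mem_ofPred_eq, fstSubSum_apply,
    Pi.le_def, Pi.zero_apply, Fin.forall_fin_succ, Fin.sum_univ_three, Fin.succ_zero_eq_one,
    Fin.succ_one_eq_two, IsEmpty.forall_iff, and_true]
  constructor
  · rintro ⟨⟨h₀, h₁, h₂, -, -, -, hK⟩, hs⟩
    exact ⟨⟨h₀, h₁, h₂⟩, by linarith, hK⟩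
  · rintro ⟨⟨h₀, h₁, h₂⟩, hs, hK⟩
    exact ⟨⟨h₀, h₁, h₂, by linarith, by linarith, by linarith, hK⟩, by linarith⟩

/-- The nef cone volume of the del Pezzo surface `S₃`: the Lebesgue measure in `ℝ⁴` of
`{(a, b₁, b₂, b₃) : bᵢ ≥ 0, bᵢ + b_j ≤ a (i ≠ j), 3a − Σbᵢ ≤ 1}` equals `1/288`. -/
theorem nef_volume_S3 :
    volume {p : ℝ × (Fin 3 → ℝ) |
        (∀ i, 0 ≤ p.2 i) ∧
        (∀ i j : Fin 3, i ≠ j → p.2 i + p.2 j ≤ p.1) ∧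
        3 * p.1 - (∑ i, p.2 i) ≤ 1} =
      ENNReal.ofReal (1 / 288) := by
  change volume nefSlice = _
  rw [measure_eq_two_mul_measure_inter_nonneg volume_preimage_cremona cremona_preimage_nefSlice
      fstSubSum_cremona measurableSet_nefSlice
      (fstSubSum 3).continuous_of_finiteDimensional.measurable (volume_fstSubSum_eq_zero 3),
    nefSlice_inter_fstSubSum_nonneg, volume_lowerSlice, ← ENNReal.ofReal_pow (by norm_num),
    ← ENNReal.ofReal_mul (by norm_num), ← ENNReal.ofReal_natCast,
    ← ENNReal.ofReal_div_of_pos (by positivity), ← ENNReal.ofReal_ofNat 2,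
    ← ENNReal.ofReal_mul (by norm_num)]
  norm_num [Nat.factorial]
end

section
/- The Lebesgue measure in ℝ⁴ of the set { (a, b₁, b₂, b₃) : 0 ≤ b₁ ≤ a, b₂ ≤ 0, b₃ ≤ 0, and 3a − (b₁ + b₂ + b₃) ≤ 1 } equals 1/144. -/
/-!
The substitution `(a, b₁, b₂, b₃) ↦ (a - b₁, b₁, -b₂, -b₃)` is volume preserving and carries the
chamber onto the weighted simplex `{u, v, x, y ≥ 0, 3u + 2v + x + y ≤ 1}`, whose volume is
`1 / (4! · 3 · 2 · 1 · 1) = 1/144`. That volume is built up one coordinate at a time: if the sublevel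
sets of `g` on `D` have volume `K tⁿ⁺¹`, then slicing `{s ≥ 0, x ∈ D, c s + g x ≤ t}` along `s`
gives `∫_{s ≥ 0} K (t - c s)ⁿ⁺¹ ds = K tⁿ⁺² / (c (n + 2))`.
-/

open MeasureTheory Set

theorem lintegral_Ici_ofReal_mul_max_sub_pow {K c : ℝ} (hK : 0 ≤ K) (hc : 0 < c) (n : ℕ)
    (t : ℝ) :
    ∫⁻ s in Ici 0, ENNReal.ofReal (K * max (t - c * s) 0 ^ (n + 1)) =
      ENNReal.ofReal (K / (c * (n + 2)) * max t 0 ^ (n + 2)) := by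
  have hvanish : ∀ s, t ≤ c * s → ENNReal.ofReal (K * max (t - c * s) 0 ^ (n + 1)) = 0 :=
    fun s hs => by simp [max_eq_right (sub_nonpos.2 hs)]
  rcases le_or_gt t 0 with ht | ht
  · rw [setLIntegral_congr_fun measurableSet_Ici fun s (hs : 0 ≤ s) =>
      hvanish s (by nlinarith)]
    simp [max_eq_right ht]
  have htc : 0 ≤ t / c := by positivity
  have htail : ∫⁻ s in Ioi (t / c), ENNReal.ofReal (K * max (t - c * s) 0 ^ (n + 1)) = 0 := by
    rw [setLIntegral_congr_fun measurableSet_Ioi fun s (hs : t / c < s) =>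
      hvanish s ((div_le_iff₀' hc).1 hs.le)]
    simp
  have hbody : ∫⁻ s in Icc 0 (t / c), ENNReal.ofReal (K * max (t - c * s) 0 ^ (n + 1)) =
      ENNReal.ofReal (∫ s in 0..t / c, K * (t - c * s) ^ (n + 1)) := by
    rw [intervalIntegral.integral_of_le htc, ← integral_Icc_eq_integral_Ioc,
      ofReal_integral_eq_lintegral_ofReal]
    · refine setLIntegral_congr_fun measurableSet_Icc fun s hs => ?_
      rw [max_eq_left (sub_nonneg.2 ((le_div_iff₀' hc).1 hs.2))]
    · exact (by fun_prop : Continuous fun s : ℝ => K * (t - c * s) ^ (n + 1)).integrableOn_Icc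
    · filter_upwards [ae_restrict_mem measurableSet_Icc] with s hs
      have : 0 ≤ t - c * s := sub_nonneg.2 ((le_div_iff₀' hc).1 hs.2)
      positivity
  have hcompute :
      ∫ s in 0..t / c, K * (t - c * s) ^ (n + 1) = K / (c * (n + 2)) * t ^ (n + 2) := by
    rw [intervalIntegral.integral_comp_sub_mul (fun x => K * x ^ (n + 1)) hc.ne',
      intervalIntegral.integral_const_mul, integral_pow]
    simp only [smul_eq_mul, mul_zero, sub_zero, mul_div_cancel₀ t hc.ne', sub_self]
    push_cast
    field_simp
    ring
  rw [← Icc_union_Ioi_eq_Ici htc,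
    lintegral_union measurableSet_Ioi ((Iic_disjoint_Ioi le_rfl).mono_left Icc_subset_Iic_self),
    htail, add_zero, hbody, hcompute, max_eq_left ht.le]

theorem volume_sublevel_Ici_prod {X : Type*} [MeasureSpace X] [SFinite (volume : Measure X)]
    {D : Set X} (hD : MeasurableSet D) {g : X → ℝ} (hg : Measurable g) {K : ℝ} (hK : 0 ≤ K)
    {n : ℕ} (hvol : ∀ t, volume {x | x ∈ D ∧ g x ≤ t} = ENNReal.ofReal (K * max t 0 ^ (n + 1)))
    {c : ℝ} (hc : 0 < c) (t : ℝ) :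
    volume {p : ℝ × X | p ∈ Ici 0 ×ˢ D ∧ c * p.1 + g p.2 ≤ t} =
      ENNReal.ofReal (K / (c * (n + 2)) * max t 0 ^ (n + 2)) := by
  have hmeas : MeasurableSet {p : ℝ × X | p ∈ Ici 0 ×ˢ D ∧ c * p.1 + g p.2 ≤ t} :=
    (measurableSet_Ici.prod hD).inter
      (measurableSet_le (f := fun p : ℝ × X => c * p.1 + g p.2) (by fun_prop) measurable_const)
  have hslice : ∀ s, volume (Prod.mk s ⁻¹' {p : ℝ × X | p ∈ Ici 0 ×ˢ D ∧ c * p.1 + g p.2 ≤ t}) =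
      (Ici 0).indicator (fun s => ENNReal.ofReal (K * max (t - c * s) 0 ^ (n + 1))) s := by
    intro s
    by_cases hs : s ∈ Ici 0
    · rw [indicator_of_mem hs, ← hvol]
      congr 1
      ext x
      simp [hs.out, le_sub_iff_add_le']
    · simp [show ¬ 0 ≤ s from hs]
  rw [Measure.volume_eq_prod, Measure.prod_apply hmeas]
  simp_rw [hslice]
  rw [lintegral_indicator measurableSet_Ici, lintegral_Ici_ofReal_mul_max_sub_pow hK hc]

theorem measurePreserving_sub_prod_prod {G X : Type*} [MeasurableSpace G] [AddGroup G]
    [MeasurableAdd₂ G] [MeasurableNeg G] [MeasurableSpace X] (μ : Measure G) [SFinite μ]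
    [μ.IsAddRightInvariant] (ν : Measure X) [SFinite ν] :
    MeasurePreserving (fun p : G × G × X => (p.1 - p.2.1, p.2))
      (μ.prod (μ.prod ν)) (μ.prod (μ.prod ν)) :=
  (measurePreserving_prodAssoc μ μ ν).comp
    (((measurePreserving_sub_prod μ μ).prod (MeasurePreserving.id ν)).comp
      (measurePreserving_prodAssoc μ μ ν).symm)

/-- The Zariski chamber on `S₃` supported on `{E₂, E₃}`: the Lebesgue measure in `ℝ⁴`
of `{(a, b₁, b₂, b₃) : 0 ≤ b₁ ≤ a, b₂ ≤ 0, b₃ ≤ 0, 3a − (b₁+b₂+b₃) ≤ 1}`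
equals `1/144`. -/
theorem chamber_volume_S3_E2E3 :
    volume {p : ℝ × ℝ × ℝ × ℝ |
        0 ≤ p.2.1 ∧ p.2.1 ≤ p.1 ∧ p.2.2.1 ≤ 0 ∧ p.2.2.2 ≤ 0 ∧
        3 * p.1 - (p.2.1 + p.2.2.1 + p.2.2.2) ≤ 1} =
      ENNReal.ofReal (1 / 144) := by
  have h₁ (t : ℝ) :
      volume {x : ℝ | x ∈ Ici 0 ∧ x ≤ t} = ENNReal.ofReal (1 * max t 0 ^ (0 + 1)) := by
    change volume (Icc 0 t) = _
    simp [Real.volume_Icc, ENNReal.ofReal_max]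
  have h₂ := volume_sublevel_Ici_prod measurableSet_Ici measurable_id zero_le_one h₁ one_pos
  have h₃ := volume_sublevel_Ici_prod (measurableSet_Ici.prod measurableSet_Ici) (by fun_prop)
    (by positivity) h₂ two_pos
  have h₄ := volume_sublevel_Ici_prod
    (measurableSet_Ici.prod (measurableSet_Ici.prod measurableSet_Ici)) (by fun_prop)
    (by positivity) h₃ three_pos 1
  have hφ : MeasurePreserving
      (fun p : ℝ × ℝ × ℝ × ℝ => (p.1 - p.2.1, p.2.1, -p.2.2.1, -p.2.2.2)) :=
    (measurePreserving_sub_prod_prod volume _).comp ((MeasurePreserving.id volume).prod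
      ((MeasurePreserving.id volume).prod ((Measure.measurePreserving_neg volume).prod
        (Measure.measurePreserving_neg volume))))
  rw [← hφ.measure_preimage (by measurability)] at h₄
  convert h₄ using 2
  · ext p
    simp only [mem_preimage, mem_ofPred_eq, mem_prod, mem_Ici, id]
    grind
  · norm_num
end
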